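/- arXiv:2208.08720 — 2 statements merged into one kernel-verified Lean document; each statement's English description precedes it below -/
import Mathlib

section
/- Let E : [0,∞) ⇉ ℝᵈ be continuous (Painlevé–Kuratowski) and of locally bounded variations, and let Y : [0,∞) ⇉ ℝᵈ have nonempty compact values with Y(·) measurable and d_H(Y(t), Y(s)) ≤ ∫_s^t ρ(h) dh for all 0 ≤ s ≤ t, where ρ ∈ L¹_loc([0,∞);[0,∞)). Then Ψ(t) := dist(E(t), Y(t)) is continuous and of locally bounded variation on [0,∞). -/
open Filter Metric Set Topology MeasureTheory

noncomputable section

/-- The excess `exc(A|B) = sup_{a ∈ A} dist(a, B)`, valued in `[0,∞]`. -/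
def eexc {X : Type*} [PseudoEMetricSpace X] (A B : Set X) : ENNReal :=
  ⨆ a ∈ A, EMetric.infEdist a B

/-- Painlevé–Kuratowski upper limit of a family of sets along a filter. -/
def setLimsup {α X : Type*} [PseudoEMetricSpace X] (l : Filter α) (S : α → Set X) : Set X :=
  {y | Filter.liminf (fun a => EMetric.infEdist y (S a)) l = 0}

/-- Painlevé–Kuratowski lower limit of a family of sets along a filter. -/
def setLiminf {α X : Type*} [PseudoEMetricSpace X] (l : Filter α) (S : α → Set X) : Set X :=
  {y | Filter.limsup (fun a => EMetric.infEdist y (S a)) l = 0}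

/-- Painlevé–Kuratowski continuity of a tube on a set `I`. -/
def PKContinuousOn {X : Type*} [PseudoEMetricSpace X] (E : ℝ → Set X) (I : Set ℝ) : Prop :=
  ∀ t ∈ I, setLimsup (𝓝[I] t) E ⊆ E t ∧ E t ⊆ setLiminf (𝓝[I] t) E

/-- A set-valued map is of locally bounded variations (Definition 3.2): on every `[a,b] ⊆ I`
the sums `Σ max(exc(E(t_{i+1})∩K | E(t_i)), exc(E(t_i)∩K | E(t_{i+1})))` over compact sets `K`
and finite partitions of `[a,b]` are uniformly bounded. -/
def IsLBV {X : Type*} [PseudoEMetricSpace X] (E : ℝ → Set X) (I : Set ℝ) : Prop :=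
  ∀ a b : ℝ, a ∈ I → b ∈ I → a ≤ b →
    ∃ M : ℝ, ∀ K : Set X, IsCompact K → ∀ (m : ℕ) (t : ℕ → ℝ),
      t 0 = a → t m = b → (∀ i, i < m → t i < t (i + 1)) →
      (∑ i ∈ Finset.range m,
        max (eexc (E (t (i + 1)) ∩ K) (E (t i))) (eexc (E (t i) ∩ K) (E (t (i + 1))))) ≤
        ENNReal.ofReal M

/-- Distance between two sets as a real number. -/
def sdist {X : Type*} [PseudoMetricSpace X] (A B : Set X) : ℝ :=
  sInf (Set.image2 dist A B)

/-! Write `Ψ t = dist(E t, Y t)` and `F t = ∫₀ᵗ ρ`, so that `d_H(Y s, Y t) ≤ |F t - F s|`.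

Continuity: for a fixed compact set `B`, `t ↦ dist(E t, B)` is upper semicontinuous because
the points of `E t₀` are limits of points of `E s` (lower Painlevé–Kuratowski limit), and lower
semicontinuous because no point of the compact set `{x | infDist x B ≤ c'}`, `c' < dist(E t₀, B)`,
is a cluster point of the `E s` (upper limit). Replacing `B = Y t₀` by `Y s` moves the distance by
at most `d_H(Y s, Y t₀)`.

Bounded variation on `[a, b]`: the `Y t` stay in a bounded set and `Ψ` is bounded, so the almost
minimising pairs for `dist(E t, Y t)` can be taken in one compact set `K`. Then
`|Ψ t - Ψ s| ≤ max(exc(E t ∩ K | E s), exc(E s ∩ K | E t)) + F t - F s`, and the right side is at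
most the increment of `W + F`, where `W t` is the supremum of the excess sums of `E` over partitions
of `[a, t]`; `W b` is finite by the LBV property. -/

open scoped ENNReal

section SetDistance

variable {X : Type*} [PseudoMetricSpace X] {A A' B B' K : Set X}

lemma sdist_nonneg : 0 ≤ sdist A B :=
  Real.sInf_nonneg (forall_mem_image2.2 fun _ _ _ _ => dist_nonneg)

lemma sdist_le_dist {a b : X} (ha : a ∈ A) (hb : b ∈ B) : sdist A B ≤ dist a b :=
  csInf_le ⟨0, forall_mem_image2.2 fun _ _ _ _ => dist_nonneg⟩ (mem_image2_of_mem ha hb)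

lemma le_sdist {c : ℝ} (hA : A.Nonempty) (hB : B.Nonempty)
    (h : ∀ a ∈ A, ∀ b ∈ B, c ≤ dist a b) : c ≤ sdist A B :=
  le_csInf (hA.image2 hB) (forall_mem_image2.2 h)

lemma exists_dist_lt_sdist_add (hA : A.Nonempty) (hB : B.Nonempty) {ε : ℝ} (hε : 0 < ε) :
    ∃ a ∈ A, ∃ b ∈ B, dist a b < sdist A B + ε := by
  obtain ⟨_, ⟨a, ha, b, hb, rfl⟩, hlt⟩ := Real.lt_sInf_add_pos (hA.image2 hB) hε
  exact ⟨a, ha, b, hb, hlt⟩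

lemma exists_dist_lt_infEDist_toReal_add {x : X} {s : Set X} (h : infEDist x s ≠ ∞) {ε : ℝ}
    (hε : 0 < ε) : ∃ y ∈ s, dist x y < (infEDist x s).toReal + ε := by
  have hs : s.Nonempty := s.eq_empty_or_nonempty.resolve_left fun hs => h (hs ▸ infEDist_empty)
  exact (infDist_lt_iff hs).1 (lt_add_of_pos_right _ hε)

lemma infEDist_le_eexc {a : X} (ha : a ∈ A) : infEDist a B ≤ eexc A B :=
  le_iSup₂ (f := fun a (_ : a ∈ A) => infEDist a B) a ha

lemma eexc_inter_self : eexc (A ∩ K) A = 0 :=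
  le_antisymm (iSup₂_le fun _ ha => (infEDist_zero_of_mem ha.1).le) bot_le

def SdistApproachedIn (K A B : Set X) : Prop :=
  ∀ δ > 0, ∃ a ∈ A ∩ K, ∃ b ∈ B, dist a b < sdist A B + δ

lemma sdistApproachedIn_univ (hA : A.Nonempty) (hB : B.Nonempty) :
    SdistApproachedIn univ A B := fun _ hδ => by
  simpa only [inter_univ] using exists_dist_lt_sdist_add hA hB hδ

lemma sdist_le_sdist_add_eexc_add_hausdorffEDist (hAB : SdistApproachedIn K A B)
    (hexc : eexc (A ∩ K) A' ≠ ∞) (hH : hausdorffEDist B B' ≠ ∞) :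
    sdist A' B' ≤ sdist A B + (eexc (A ∩ K) A').toReal + (hausdorffEDist B B').toReal := by
  refine le_of_forall_pos_le_add fun δ hδ => ?_
  obtain ⟨a, ha, b, hb, hab⟩ := hAB (δ / 3) (by positivity)
  have haA' := infEDist_le_eexc (B := A') ha
  have hbB' := infEDist_le_hausdorffEDist_of_mem (t := B') hb
  obtain ⟨a', ha', haa'⟩ :=
    exists_dist_lt_infEDist_toReal_add (ne_top_of_le_ne_top hexc haA') (by positivity : 0 < δ / 3)
  obtain ⟨b', hb', hbb'⟩ :=
    exists_dist_lt_infEDist_toReal_add (ne_top_of_le_ne_top hH hbB') (by positivity : 0 < δ / 3)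
  have ha_le := ENNReal.toReal_mono hexc haA'
  have hb_le := ENNReal.toReal_mono hH hbB'
  calc sdist A' B' ≤ dist a' b' := sdist_le_dist ha' hb'
    _ ≤ dist a a' + dist a b + dist b b' := by
      rw [dist_comm a a']; exact dist_triangle4 a' a b b'
    _ ≤ _ := by linarith

lemma edist_sdist_le_max_eexc_add_hausdorffEDist (hAB : SdistApproachedIn K A B)
    (hAB' : SdistApproachedIn K A' B') :
    edist (sdist A B) (sdist A' B') ≤
      max (eexc (A' ∩ K) A) (eexc (A ∩ K) A') + hausdorffEDist B B' := by
  by_cases hfin : max (eexc (A' ∩ K) A) (eexc (A ∩ K) A') + hausdorffEDist B B' = ∞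
  · exact hfin ▸ le_top
  obtain ⟨hmax, hH⟩ := ENNReal.add_ne_top.1 hfin
  have h₁ := ne_top_of_le_ne_top hmax (le_max_left _ _)
  have h₂ := ne_top_of_le_ne_top hmax (le_max_right _ _)
  have hAA' := sdist_le_sdist_add_eexc_add_hausdorffEDist hAB h₂ hH
  have hA'A := sdist_le_sdist_add_eexc_add_hausdorffEDist hAB' h₁
    (hausdorffEDist_comm (s := B) ▸ hH)
  rw [hausdorffEDist_comm] at hA'A
  rw [edist_dist, ← ENNReal.ofReal_toReal hfin, ENNReal.toReal_add hmax hH,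
    ENNReal.toReal_max h₁ h₂, Real.dist_eq]
  refine ENNReal.ofReal_le_ofReal (abs_sub_le_iff.2 ⟨?_, ?_⟩) <;>
    linarith [le_max_left (eexc (A' ∩ K) A).toReal (eexc (A ∩ K) A').toReal,
      le_max_right (eexc (A' ∩ K) A).toReal (eexc (A ∩ K) A').toReal]

lemma edist_sdist_sdist_le_hausdorffEDist (hA : A.Nonempty) (hB : B.Nonempty)
    (hB' : B'.Nonempty) : edist (sdist A B) (sdist A B') ≤ hausdorffEDist B B' := by
  simpa only [eexc_inter_self, max_self, zero_add] using
    edist_sdist_le_max_eexc_add_hausdorffEDist (sdistApproachedIn_univ hA hB)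
      (sdistApproachedIn_univ hA hB')

end SetDistance

section Semicontinuity

variable {X ι : Type*} [PseudoMetricSpace X] {l : Filter ι} {S T : ι → Set X} {A B : Set X}

lemma eventually_sdist_lt_of_subset_setLiminf (hA : A ⊆ setLiminf l S) (hAne : A.Nonempty)
    (hBne : B.Nonempty) {c : ℝ} (hc : sdist A B < c) : ∀ᶠ i in l, sdist (S i) B < c := by
  obtain ⟨a, ha, b, hb, hab⟩ := exists_dist_lt_sdist_add hAne hBne (sub_pos.2 hc)
  have hlim : limsup (fun i => infEDist a (S i)) l = 0 := hA ha
  have hr : (0 : ℝ≥0∞) < ENNReal.ofReal (c - dist a b) := ENNReal.ofReal_pos.2 (by linarith)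
  filter_upwards [eventually_lt_of_limsup_lt (hlim.trans_lt hr)] with i hi
  obtain ⟨z, hz, hza⟩ := infEDist_lt_iff.1 hi
  rw [edist_lt_ofReal] at hza
  calc sdist (S i) B ≤ dist z b := sdist_le_dist hz hb
    _ ≤ dist a z + dist a b := dist_triangle_left z b a
    _ < c := by linarith

lemma eventually_lt_sdist_of_setLimsup_subset [ProperSpace X] (hA : setLimsup l S ⊆ A)
    (hB : IsCompact B) (hBne : B.Nonempty) (hS : ∀ᶠ i in l, (S i).Nonempty) {c : ℝ}
    (hc : c < sdist A B) : ∀ᶠ i in l, c < sdist (S i) B := by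
  rcases lt_or_ge c 0 with hc0 | hc0
  · exact Eventually.of_forall fun _ => hc0.trans_le sdist_nonneg
  obtain ⟨c', hcc', hc'⟩ := exists_between hc
  have hL : IsCompact (cthickening c' B) :=
    isCompact_of_isClosed_isBounded isClosed_cthickening hB.isBounded.cthickening
  -- a point of `cthickening c' B` is not in `A`, hence not a cluster point of the `S i`
  have hfar : ∀ p ∈ cthickening c' B, ∀ᶠ q : ι × X in l ×ˢ 𝓝 p, q.2 ∉ S q.1 := by
    intro p hp
    rw [hB.cthickening_eq_biUnion_closedBall (by linarith)] at hp
    obtain ⟨y, hy, hpy⟩ := mem_iUnion₂.1 hp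
    have hpA : p ∉ A := fun hpA =>
      (hc'.trans_le ((sdist_le_dist hpA hy).trans (mem_closedBall.1 hpy))).false
    have hpos : 0 < liminf (fun i => infEDist p (S i)) l :=
      pos_iff_ne_zero.2 fun h => hpA (hA h)
    obtain ⟨r, hr0, hr⟩ := exists_between hpos
    filter_upwards [(eventually_lt_of_lt_liminf hr).prod_mk (eball_mem_nhds p hr0)]
      with q ⟨hq, hqp⟩ hqS
    exact ((infEDist_le_edist_of_mem hqS).trans_lt (edist_comm q.2 p ▸ hqp)).not_gt hq
  have hfar' : ∀ᶠ q : ι × X in l ×ˢ 𝓝ˢ (cthickening c' B), q.2 ∉ S q.1 :=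
    hL.mem_prod_nhdsSet_of_forall hfar
  filter_upwards [hfar'.curry, hS] with i hi hne
  refine hcc'.trans_le (le_sdist hne hBne fun x hx y hy => ?_)
  by_contra! hxy
  exact hi.self_of_nhdsSet x (mem_cthickening_of_dist_le x y c' B hy hxy.le) hx

lemma tendsto_sdist_of_tendsto_hausdorffEDist [ProperSpace X] (hsup : setLimsup l S ⊆ A)
    (hinf : A ⊆ setLiminf l S) (hAne : A.Nonempty) (hB : IsCompact B) (hBne : B.Nonempty)
    (hS : ∀ᶠ i in l, (S i).Nonempty) (hT : Tendsto (fun i => hausdorffEDist B (T i)) l (𝓝 0)) :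
    Tendsto (fun i => sdist (S i) (T i)) l (𝓝 (sdist A B)) := by
  have hSB : Tendsto (fun i => sdist (S i) B) l (𝓝 (sdist A B)) :=
    tendsto_order.2 ⟨fun _ hc => eventually_lt_sdist_of_setLimsup_subset hsup hB hBne hS hc,
      fun _ hc => eventually_sdist_lt_of_subset_setLiminf hinf hAne hBne hc⟩
  have hfin : ∀ᶠ i in l, hausdorffEDist B (T i) ≠ ∞ :=
    (hT.eventually (gt_mem_nhds zero_lt_one)).mono fun _ h => ne_top_of_lt h
  refine tendsto_of_tendsto_of_dist hSB (squeeze_zero' (Eventually.of_forall fun _ => dist_nonneg)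
    ?_ (by simpa using (ENNReal.tendsto_toReal ENNReal.zero_ne_top).comp hT))
  filter_upwards [hfin, hS] with i hi hne
  rw [dist_edist]
  exact ENNReal.toReal_mono hi
    (edist_sdist_sdist_le_hausdorffEDist hne hBne (nonempty_of_hausdorffEDist_ne_top hBne hi))

end Semicontinuity

lemma tendsto_hausdorffEDist_of_le_ofReal_sub {X : Type*} [PseudoMetricSpace X]
    {Y : ℝ → Set X} {F : ℝ → ℝ} {I : Set ℝ} {t₀ : ℝ}
    (hY : ∀ s ∈ I, ∀ t ∈ I, s ≤ t → hausdorffEDist (Y t) (Y s) ≤ ENNReal.ofReal (F t - F s))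
    (ht₀ : t₀ ∈ I) (hF : ContinuousWithinAt F I t₀) :
    Tendsto (fun t => hausdorffEDist (Y t₀) (Y t)) (𝓝[I] t₀) (𝓝 0) := by
  have hlim : Tendsto (fun t => ENNReal.ofReal |F t - F t₀|) (𝓝[I] t₀) (𝓝 0) := by
    simpa using ENNReal.tendsto_ofReal (hF.sub (tendsto_const_nhds (x := F t₀))).abs
  refine tendsto_of_tendsto_of_tendsto_of_le_of_le' tendsto_const_nhds hlim
    (Eventually.of_forall fun _ => zero_le) ?_
  filter_upwards [self_mem_nhdsWithin] with t ht
  rcases le_total t t₀ with h | h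
  · exact (hY t ht t₀ ht₀ h).trans
      (ENNReal.ofReal_le_ofReal (abs_sub_comm (F t) _ ▸ le_abs_self _))
  · exact hausdorffEDist_comm (s := Y t₀) ▸ (hY t₀ ht₀ t ht h).trans
      (ENNReal.ofReal_le_ofReal (le_abs_self _))

section Primitive

variable {ρ : ℝ → ℝ} {c : ℝ}

lemma intervalIntegrable_of_locallyIntegrableOn_Ici {s t : ℝ} (hρ : LocallyIntegrableOn ρ (Ici c))
    (hs : c ≤ s) (ht : c ≤ t) : IntervalIntegrable ρ volume s t :=
  (hρ.integrableOn_compact_subset (fun _ hx => le_trans (le_inf hs ht) hx.1)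
    isCompact_uIcc).intervalIntegrable

lemma integral_eq_primitive_sub_primitive {s t : ℝ} (hρ : LocallyIntegrableOn ρ (Ici c))
    (hs : c ≤ s) (ht : c ≤ t) : ∫ x in s..t, ρ x = (∫ x in c..t, ρ x) - ∫ x in c..s, ρ x :=
  (intervalIntegral.integral_interval_sub_left
    (intervalIntegrable_of_locallyIntegrableOn_Ici hρ le_rfl ht)
    (intervalIntegrable_of_locallyIntegrableOn_Ici hρ le_rfl hs)).symm

lemma monotoneOn_primitive_Ici (hρ0 : ∀ x ∈ Ici c, 0 ≤ ρ x) (hρ : LocallyIntegrableOn ρ (Ici c)) :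
    MonotoneOn (fun t => ∫ x in c..t, ρ x) (Ici c) := fun _ hs _ ht hst =>
  sub_nonneg.1 <| integral_eq_primitive_sub_primitive hρ hs ht ▸
    intervalIntegral.integral_nonneg hst fun x hx => hρ0 x (le_trans hs hx.1)

lemma continuousOn_primitive_Ici (hρ : LocallyIntegrableOn ρ (Ici c)) :
    ContinuousOn (fun t => ∫ x in c..t, ρ x) (Ici c) := by
  intro t (ht : c ≤ t)
  have hct : c ≤ t + 1 := by linarith
  have hcont := intervalIntegral.continuousOn_primitive_interval'
    (intervalIntegrable_of_locallyIntegrableOn_Ici hρ le_rfl hct) left_mem_uIcc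
  rw [uIcc_of_le hct] at hcont
  refine (hcont t ⟨ht, by linarith⟩).mono_of_mem_nhdsWithin ?_
  exact mem_of_superset (inter_mem_nhdsWithin _ (Iio_mem_nhds (lt_add_one t)))
    fun x hx => ⟨hx.1, hx.2.le⟩

end Primitive

section Variation

def chainSup {α : Type*} [Preorder α] (X : α → α → ℝ≥0∞) (a t : α) : ℝ≥0∞ :=
  ⨆ (m : ℕ) (u : ℕ → α) (_ : u 0 = a ∧ u m = t ∧ ∀ i < m, u i < u (i + 1)),
    ∑ i ∈ Finset.range m, X (u i) (u (i + 1))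

variable {α : Type*} [LinearOrder α] {X : α → α → ℝ≥0∞} {a s t : α}

lemma chainSup_add_le (has : a ≤ s) (hst : s < t) : chainSup X a s + X s t ≤ chainSup X a t := by
  have hext : ∀ m (u : ℕ → α), u 0 = a ∧ u m = s ∧ (∀ i < m, u i < u (i + 1)) →
      ∑ i ∈ Finset.range m, X (u i) (u (i + 1)) + X s t ≤ chainSup X a t := by
    rintro m u ⟨h0, hm, hu⟩
    set v : ℕ → α := fun i => if i ≤ m then u i else t
    have hv : ∀ i ≤ m, v i = u i := fun i hi => if_pos hi
    have hvm : v (m + 1) = t := if_neg (by omega)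
    refine le_iSup₂_of_le (m + 1) v <|
      le_iSup_of_le ⟨(hv 0 (by omega)).trans h0, hvm, fun i hi => ?_⟩ ?_
    · rcases (Nat.lt_succ_iff.1 hi).lt_or_eq with hi | rfl
      · rw [hv i hi.le, hv (i + 1) hi]; exact hu i hi
      · rw [hv i le_rfl, hvm, hm]; exact hst
    · rw [Finset.sum_range_succ, hv m le_rfl, hvm, hm]
      gcongr with i hi
      rw [hv i (Finset.mem_range.1 hi).le, hv (i + 1) (Finset.mem_range.1 hi)]
  have hX : X s t ≤ chainSup X a t := by
    rcases has.lt_or_eq with has | rfl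
    · exact (le_add_left le_rfl).trans
        (hext 1 (fun i => if i = 0 then a else s) ⟨rfl, rfl, by simpa using has⟩)
    · simpa using hext 0 (fun _ => a) ⟨rfl, rfl, by simp⟩
  have : Nonempty α := ⟨a⟩
  rw [chainSup]
  simp only [ENNReal.iSup_add]
  refine iSup₂_le fun m u => ?_
  by_cases h : u 0 = a ∧ u m = s ∧ ∀ i < m, u i < u (i + 1)
  · rw [iSup_pos h]; exact hext m u h
  · rw [iSup_neg h, bot_eq_zero, zero_add]; exact hX

lemma chainSup_mono (has : a ≤ s) (hst : s ≤ t) : chainSup X a s ≤ chainSup X a t := by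
  rcases hst.lt_or_eq with hst | rfl
  · exact le_self_add.trans (chainSup_add_le has hst)
  · exact le_rfl

lemma eVariationOn_le_of_edist_le_ofReal_sub {E : Type*} [PseudoEMetricSpace E] {f : α → E}
    {g : α → ℝ} {s : Set α} (hg : MonotoneOn g s)
    (h : ∀ x ∈ s, ∀ y ∈ s, x ≤ y → edist (f x) (f y) ≤ ENNReal.ofReal (g y - g x)) :
    eVariationOn f s ≤ eVariationOn g s := by
  refine iSup_le fun ⟨n, u, hu, us⟩ =>
    le_trans (Finset.sum_le_sum fun i _ => ?_) (eVariationOn.sum_le hu us)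
  have hle := hu i.le_succ
  rw [edist_comm, edist_dist, Real.dist_eq, abs_of_nonneg (sub_nonneg.2 (hg (us i) (us _) hle))]
  exact h _ (us i) _ (us _) hle

end Variation

section BoundedVariation

variable {X : Type*} [PseudoMetricSpace X]

lemma isBounded_biUnion_of_hausdorffEDist_le {ι : Type*} {Y : ι → Set X} {s : Set ι} {i₀ : ι}
    {r : ℝ} (h₀ : Bornology.IsBounded (Y i₀))
    (h : ∀ i ∈ s, hausdorffEDist (Y i) (Y i₀) ≤ ENNReal.ofReal r) :
    Bornology.IsBounded (⋃ i ∈ s, Y i) :=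
  (h₀.cthickening (δ := r)).subset <| iUnion₂_subset fun i hi _ hy =>
    mem_cthickening_iff.2 ((infEDist_le_hausdorffEDist_of_mem hy).trans (h i hi))

lemma exists_isCompact_forall_sdistApproachedIn [ProperSpace X] {ι : Type*} {E Y : ι → Set X}
    {s : Set ι} (hE : ∀ i ∈ s, (E i).Nonempty) (hY : ∀ i ∈ s, (Y i).Nonempty)
    (hYb : Bornology.IsBounded (⋃ i ∈ s, Y i))
    (hbdd : BddAbove ((fun i => sdist (E i) (Y i)) '' s)) :
    ∃ K, IsCompact K ∧ ∀ i ∈ s, SdistApproachedIn K (E i) (Y i) := by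
  obtain ⟨C, hC⟩ := hbdd
  refine ⟨closure (thickening (C + 1) (⋃ i ∈ s, Y i)), hYb.thickening.isCompact_closure,
    fun i hi δ hδ => ?_⟩
  obtain ⟨x, hx, y, hy, hxy⟩ := exists_dist_lt_sdist_add (hE i hi) (hY i hi) (lt_min hδ one_pos)
  have hCi : sdist (E i) (Y i) ≤ C := hC (mem_image_of_mem _ hi)
  refine ⟨x, ⟨hx, subset_closure (mem_thickening_iff.2 ⟨y, mem_iUnion₂.2 ⟨i, hi, hy⟩, ?_⟩)⟩, y, hy,
    hxy.trans_le (by gcongr; exact min_le_left _ _)⟩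
  linarith [min_le_right δ 1]

theorem boundedVariationOn_sdist {E Y : ℝ → Set X} {F : ℝ → ℝ} {K : Set X} {a b : ℝ}
    (hab : a ≤ b) (hK : ∀ t ∈ Icc a b, SdistApproachedIn K (E t) (Y t))
    (hE : chainSup (fun s t => max (eexc (E t ∩ K) (E s)) (eexc (E s ∩ K) (E t))) a b ≠ ∞)
    (hF : MonotoneOn F (Icc a b))
    (hY : ∀ s ∈ Icc a b, ∀ t ∈ Icc a b, s ≤ t →
      hausdorffEDist (Y t) (Y s) ≤ ENNReal.ofReal (F t - F s)) :
    BoundedVariationOn (fun t => sdist (E t) (Y t)) (Icc a b) := by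
  set X : ℝ → ℝ → ℝ≥0∞ := fun s t => max (eexc (E t ∩ K) (E s)) (eexc (E s ∩ K) (E t))
  set W := chainSup X a
  have hW : ∀ t ∈ Icc a b, W t ≠ ∞ := fun t ht => ne_top_of_le_ne_top hE (chainSup_mono ht.1 ht.2)
  have hWF : MonotoneOn (fun t => (W t).toReal + F t) (Icc a b) := fun s hs t ht hst =>
    add_le_add (ENNReal.toReal_mono (hW t ht) (chainSup_mono hs.1 hst)) (hF hs ht hst)
  refine ne_top_of_le_ne_top ?_ (eVariationOn_le_of_edist_le_ofReal_sub hWF fun s hs t ht hst => ?_)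
  · simpa only [inter_self, BoundedVariationOn] using
      hWF.locallyBoundedVariationOn a b ⟨le_rfl, hab⟩ ⟨hab, le_rfl⟩
  rcases hst.lt_or_eq with hst | rfl
  swap
  · simp
  have hWst : W s ≤ W t := chainSup_mono hs.1 hst.le
  calc edist (sdist (E s) (Y s)) (sdist (E t) (Y t)) ≤ X s t + hausdorffEDist (Y s) (Y t) :=
        edist_sdist_le_max_eexc_add_hausdorffEDist (hK s hs) (hK t ht)
    _ ≤ ENNReal.ofReal ((W t).toReal - (W s).toReal) + ENNReal.ofReal (F t - F s) := by
        rw [← ENNReal.toReal_sub_of_le hWst (hW t ht), ENNReal.ofReal_toReal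
          (ENNReal.sub_ne_top (hW t ht)), hausdorffEDist_comm]
        exact add_le_add (ENNReal.le_sub_of_add_le_left (hW s hs) (chainSup_add_le hs.1 hst))
          (hY s hs t ht hst.le)
    _ = ENNReal.ofReal ((W t).toReal + F t - ((W s).toReal + F s)) := by
        rw [← ENNReal.ofReal_add (sub_nonneg.2 (ENNReal.toReal_mono (hW t ht) hWst))
          (sub_nonneg.2 (hF hs ht hst.le))]
        congr 1
        ring

variable [ProperSpace X]

theorem continuousOn_sdist {E Y : ℝ → Set X} {F : ℝ → ℝ} {I : Set ℝ}
    (hEcont : PKContinuousOn E I) (hE : ∀ t ∈ I, (E t).Nonempty)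
    (hY : ∀ t ∈ I, (Y t).Nonempty ∧ IsCompact (Y t)) (hF : ContinuousOn F I)
    (hYF : ∀ s ∈ I, ∀ t ∈ I, s ≤ t → hausdorffEDist (Y t) (Y s) ≤ ENNReal.ofReal (F t - F s)) :
    ContinuousOn (fun t => sdist (E t) (Y t)) I := fun t ht =>
  tendsto_sdist_of_tendsto_hausdorffEDist (hEcont t ht).1 (hEcont t ht).2 (hE t ht)
    (hY t ht).2 (hY t ht).1 (eventually_mem_nhdsWithin.mono hE)
    (tendsto_hausdorffEDist_of_le_ofReal_sub hYF ht (hF t ht))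

theorem locallyBoundedVariationOn_sdist {E Y : ℝ → Set X} {F : ℝ → ℝ} {I : Set ℝ}
    (hI : I.OrdConnected) (hE : ∀ t ∈ I, (E t).Nonempty) (hELBV : IsLBV E I)
    (hYne : ∀ t ∈ I, (Y t).Nonempty) (hYb : ∀ t ∈ I, Bornology.IsBounded (Y t))
    (hF : MonotoneOn F I)
    (hYF : ∀ s ∈ I, ∀ t ∈ I, s ≤ t → hausdorffEDist (Y t) (Y s) ≤ ENNReal.ofReal (F t - F s))
    (hcont : ContinuousOn (fun t => sdist (E t) (Y t)) I) :
    LocallyBoundedVariationOn (fun t => sdist (E t) (Y t)) I := by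
  intro a b ha hb
  rcases lt_or_ge b a with hba | hab
  · exact BoundedVariationOn.of_subsingleton (by simp [Icc_eq_empty_of_lt hba])
  have hsub : Icc a b ⊆ I := hI.out ha hb
  rw [inter_eq_right.2 hsub]
  have hYa : ∀ t ∈ Icc a b, hausdorffEDist (Y t) (Y a) ≤ ENNReal.ofReal (F b - F a) :=
    fun t ht => (hYF a ha t (hsub ht) ht.1).trans <|
      ENNReal.ofReal_le_ofReal (by linarith [hF (hsub ht) hb ht.2])
  obtain ⟨K, hK, hnear⟩ := exists_isCompact_forall_sdistApproachedIn
    (fun t ht => hE t (hsub ht)) (fun t ht => hYne t (hsub ht))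
    (isBounded_biUnion_of_hausdorffEDist_le (hYb a ha) hYa)
    (isCompact_Icc.bddAbove_image (hcont.mono hsub))
  obtain ⟨M, hM⟩ := hELBV a b ha hb hab
  refine boundedVariationOn_sdist hab hnear (ne_top_of_le_ne_top (b := ENNReal.ofReal M)
    ENNReal.ofReal_ne_top ?_) (hF.mono hsub) fun s hs t ht => hYF s (hsub hs) t (hsub ht)
  simpa only [chainSup, iSup_le_iff, and_imp] using hM K hK

end BoundedVariation

theorem stmt8_general {d : ℕ} (E Y : ℝ → Set (EuclideanSpace ℝ (Fin d)))
    (hEval : ∀ t ∈ Ici (0 : ℝ), (E t).Nonempty ∧ IsClosed (E t))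
    (hEcont : PKContinuousOn E (Ici 0))
    (hELBV : IsLBV E (Ici 0))
    (hYval : ∀ t ∈ Ici (0 : ℝ), (Y t).Nonempty ∧ IsCompact (Y t))
    (ρ : ℝ → ℝ) (hρ0 : ∀ t, 0 ≤ ρ t) (hρ : LocallyIntegrableOn ρ (Ici 0))
    (hH : ∀ s t : ℝ, 0 ≤ s → s ≤ t →
      EMetric.hausdorffEdist (Y t) (Y s) ≤ ENNReal.ofReal (∫ h in s..t, ρ h)) :
    ContinuousOn (fun t => sdist (E t) (Y t)) (Ici 0) ∧
      LocallyBoundedVariationOn (fun t => sdist (E t) (Y t)) (Ici 0) := by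
  set F : ℝ → ℝ := fun t => ∫ h in (0 : ℝ)..t, ρ h
  have hYF : ∀ s ∈ Ici (0 : ℝ), ∀ t ∈ Ici (0 : ℝ), s ≤ t →
      hausdorffEDist (Y t) (Y s) ≤ ENNReal.ofReal (F t - F s) := fun s hs t ht hst =>
    integral_eq_primitive_sub_primitive hρ hs ht ▸ hH s t hs hst
  have hE : ∀ t ∈ Ici (0 : ℝ), (E t).Nonempty := fun t ht => (hEval t ht).1
  have hcont := continuousOn_sdist hEcont hE hYval (continuousOn_primitive_Ici hρ) hYF
  exact ⟨hcont, locallyBoundedVariationOn_sdist ordConnected_Ici hE hELBV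
    (fun t ht => (hYval t ht).1) (fun t ht => (hYval t ht).2.isBounded)
    (monotoneOn_primitive_Ici (fun x _ => hρ0 x) hρ) hYF hcont⟩

/-- Lemma 4.2: if `E` is a continuous LBV tube and `Y` has nonempty compact values, is
measurable, and is absolutely continuous in Hausdorff distance, then
`Ψ(t) = dist(E(t), Y(t))` is continuous and of locally bounded variation on `[0,∞)`. -/
theorem stmt8 {d : ℕ} (E Y : ℝ → Set (EuclideanSpace ℝ (Fin d)))
    (hEval : ∀ t ∈ Ici (0 : ℝ), (E t).Nonempty ∧ IsClosed (E t))
    (hEcont : PKContinuousOn E (Ici 0))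
    (hELBV : IsLBV E (Ici 0))
    (hYval : ∀ t ∈ Ici (0 : ℝ), (Y t).Nonempty ∧ IsCompact (Y t))
    (hYmeas : ∀ x : EuclideanSpace ℝ (Fin d), Measurable (fun t => EMetric.infEdist x (Y t)))
    (ρ : ℝ → ℝ) (hρ0 : ∀ t, 0 ≤ ρ t) (hρ : LocallyIntegrableOn ρ (Ici 0))
    (hH : ∀ s t : ℝ, 0 ≤ s → s ≤ t →
      EMetric.hausdorffEdist (Y t) (Y s) ≤ ENNReal.ofReal (∫ h in s..t, ρ h)) :
    ContinuousOn (fun t => sdist (E t) (Y t)) (Ici 0) ∧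
      LocallyBoundedVariationOn (fun t => sdist (E t) (Y t)) (Ici 0) :=
  stmt8_general E Y hEval hEcont hELBV hYval ρ hρ0 hρ hH
end
end

section
/- Let E ⊆ ℝᵏ be a closed set and x ∈ E. Then the Clarke tangent cone satisfies T^C_E(x) = (N_E(x))⁻ ⊆ T_E(x), where N_E(x) is the limiting normal cone and T_E(x) the Bouligand tangent cone; moreover (T^C_E(x))⁻ = cl co N_E(x). -/
/-!
Clarke directions at `x` are, by compactness of balls, approximately Bouligand directions at every
point of `E` near `x`, while limiting normals are limits of polars of those cones; this gives
`T^C_E(x) ⊆ N_E(x)⁻`. Conversely, if `v` is not a Clarke direction, there are `y ∈ E` near `x` and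
small `t > 0` with `d_E(y + t v) ≥ ε t`. Along the segment `s ↦ y + s v` the distance to `E` must,
at some point where it is positive, grow faster than `ε / 4`; there the unit vector `p` pointing
from the nearest point of `E` to `y + s v` is a proximal normal, hence lies in the polar of the
Bouligand cone, and `⟪p, v⟫ ≥ ε / 4` because `⟪p, v⟫` is the derivative of the distance to that
nearest point. A cluster point of such `p` is a limiting normal `q` with `⟪q, v⟫ > 0`.
The last identity is the bipolar theorem for the cone `N_E(x)`.
-/

open Filter Metric Set Topology

noncomputable section

/-- Bouligand (contingent) tangent cone: `T_E(x) = Limsup_{t→0⁺} (E − x)/t`. -/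
def bouligand {k : ℕ} (E : Set (EuclideanSpace ℝ (Fin k))) (x : EuclideanSpace ℝ (Fin k)) :
    Set (EuclideanSpace ℝ (Fin k)) :=
  setLimsup (𝓝[>] (0 : ℝ)) (fun t => (fun e => t⁻¹ • (e - x)) '' E)

/-- Clarke tangent cone: `T^C_E(x) = Liminf_{t→0⁺, y→x in E} (E − y)/t`. -/
def clarkeTangent {k : ℕ} (E : Set (EuclideanSpace ℝ (Fin k))) (x : EuclideanSpace ℝ (Fin k)) :
    Set (EuclideanSpace ℝ (Fin k)) :=
  setLiminf ((𝓝[>] (0 : ℝ)) ×ˢ (𝓝[E] x)) (fun p => (fun e => p.1⁻¹ • (e - p.2)) '' E)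

/-- Negative polar of a set: `S⁻ = {p : ⟨p,s⟩ ≤ 0 for all s ∈ S}`. -/
def npolar {k : ℕ} (S : Set (EuclideanSpace ℝ (Fin k))) : Set (EuclideanSpace ℝ (Fin k)) :=
  {p | ∀ s ∈ S, (inner ℝ p s : ℝ) ≤ 0}

/-- Limiting normal cone: `N_E(x) = Limsup_{y→x in E} (T_E(y))⁻`. -/
def limitingNormal {k : ℕ} (E : Set (EuclideanSpace ℝ (Fin k))) (x : EuclideanSpace ℝ (Fin k)) :
    Set (EuclideanSpace ℝ (Fin k)) :=
  setLimsup (𝓝[E] x) (fun y => npolar (bouligand E y))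

open scoped RealInnerProductSpace

section SetLimits

variable {α X : Type*} [PseudoMetricSpace X] {l : Filter α} {S : α → Set X} {v : X}

theorem infEDist_lt_ofReal_iff {s : Set X} {ε : ℝ} :
    infEDist v s < ENNReal.ofReal ε ↔ ∃ w ∈ s, dist v w < ε := by
  simp only [infEDist_lt_iff, edist_lt_ofReal]

theorem ENNReal.forall_pos_iff_forall_ofReal {P : ENNReal → Prop}
    (hP : ∀ ⦃a b⦄, a ≤ b → P a → P b) :
    (∀ y > 0, P y) ↔ ∀ ε : ℝ, 0 < ε → P (ENNReal.ofReal ε) := by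
  refine ⟨fun h ε hε => h _ (ENNReal.ofReal_pos.2 hε), fun h y hy => ?_⟩
  obtain ⟨r, -, hr, hry⟩ := ENNReal.lt_iff_exists_real_btwn.1 hy
  exact hP hry.le (h r (ENNReal.ofReal_pos.1 hr))

theorem mem_setLimsup_iff :
    v ∈ setLimsup l S ↔ ∀ ε : ℝ, 0 < ε → ∃ᶠ a in l, ∃ w ∈ S a, dist v w < ε := by
  change liminf (fun a => infEDist v (S a)) l = 0 ↔ _
  rw [← nonpos_iff_eq_zero, liminf_le_iff,
    ENNReal.forall_pos_iff_forall_ofReal fun _ _ hab h => h.mono fun _ ha => ha.trans_le hab]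
  simp only [infEDist_lt_ofReal_iff]

theorem mem_setLiminf_iff :
    v ∈ setLiminf l S ↔ ∀ ε : ℝ, 0 < ε → ∀ᶠ a in l, ∃ w ∈ S a, dist v w < ε := by
  change limsup (fun a => infEDist v (S a)) l = 0 ↔ _
  rw [← nonpos_iff_eq_zero, limsup_le_iff,
    ENNReal.forall_pos_iff_forall_ofReal fun _ _ hab h => h.mono fun _ ha => ha.trans_le hab]
  simp only [infEDist_lt_ofReal_iff]

theorem setLiminf_subset_setLimsup [l.NeBot] : setLiminf l S ⊆ setLimsup l S := fun _ hv =>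
  mem_setLimsup_iff.2 fun ε hε => (mem_setLiminf_iff.1 hv ε hε).frequently

theorem setLiminf_subset_setLiminf_comp {β : Type*} {l' : Filter β} {f : β → α}
    (hf : Tendsto f l' l) : setLiminf l S ⊆ setLiminf l' (S ∘ f) := fun _ hv =>
  mem_setLiminf_iff.2 fun ε hε => hf.eventually (mem_setLiminf_iff.1 hv ε hε)

theorem mem_setLimsup_of_forall_mem [l.NeBot] (h : ∀ a, v ∈ S a) : v ∈ setLimsup l S :=
  mem_setLimsup_iff.2 fun _ hε => .of_forall fun a => ⟨v, h a, by simpa using hε⟩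

theorem smul_mem_setLimsup {𝕜 Y : Type*} [NormedField 𝕜] [SeminormedAddCommGroup Y]
    [NormedSpace 𝕜 Y] {S : α → Set Y} {v : Y} {c : 𝕜} (hc : c ≠ 0)
    (hS : ∀ a, ∀ w ∈ S a, c • w ∈ S a) (hv : v ∈ setLimsup l S) : c • v ∈ setLimsup l S := by
  refine mem_setLimsup_iff.2 fun ε hε => ?_
  refine (mem_setLimsup_iff.1 hv (ε / ‖c‖) (by positivity)).mono ?_
  rintro a ⟨w, hw, hvw⟩
  refine ⟨c • w, hS a w hw, ?_⟩
  rwa [dist_smul₀, ← lt_div_iff₀' (norm_pos_iff.2 hc)]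

theorem le_of_mem_setLimsup {F : X × α → ℝ} {L : ℝ} (hv : v ∈ setLimsup l S)
    (hF : Tendsto F (𝓝 v ×ˢ l) (𝓝 L)) (hS : ∀ᶠ a in l, ∀ w ∈ S a, F (w, a) ≤ 0) : L ≤ 0 := by
  refine le_of_tendsto_of_frequently hF (frequently_iff.2 fun {U} hU => ?_)
  obtain ⟨U₁, hU₁, U₂, hU₂, hU⟩ := mem_prod_iff.1 hU
  obtain ⟨ε, hε, hball⟩ := Metric.mem_nhds_iff.1 hU₁
  obtain ⟨a, ⟨w, hw, hvw⟩, ha, hSa⟩ :=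
    ((mem_setLimsup_iff.1 hv ε hε).and_eventually (Filter.inter_mem hU₂ hS)).exists
  exact ⟨(w, a), hU ⟨hball (mem_ball'.2 hvw), ha⟩, hSa w hw⟩

theorem setLimsup_inter_nonempty_of_frequently {K : Set X} (hK : IsCompact K)
    (h : ∃ᶠ a in l, (S a ∩ K).Nonempty) : (setLimsup l S ∩ K).Nonempty := by
  by_contra hempty
  have hfar : ∀ q ∈ K, ∃ ε > 0, ∀ᶠ a in l, ∀ w ∈ S a, ε ≤ dist q w := fun q hq => by
    have hq' : q ∉ setLimsup l S := fun h' => hempty ⟨q, h', hq⟩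
    simpa [mem_setLimsup_iff] using hq'
  choose! ε hε hεS using hfar
  obtain ⟨t, htK, hcover⟩ := hK.elim_nhds_subcover (fun q => ball q (ε q))
    fun q hq => ball_mem_nhds q (hε q hq)
  have hS : ∀ᶠ a in l, ∀ q ∈ t, ∀ w ∈ S a, ε q ≤ dist q w :=
    (eventually_all_finset t).2 fun q hq => hεS q (htK q hq)
  obtain ⟨a, ⟨w, hwS, hwK⟩, ha⟩ := (h.and_eventually hS).exists
  obtain ⟨q, hq, hwq⟩ := mem_iUnion₂.1 (hcover hwK)
  exact (ha q hq w hwS).not_gt (mem_ball'.1 hwq)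

theorem setLiminf_prod_subset_setLiminf_setLimsup [ProperSpace X] {β : Type*} {l₁ : Filter α}
    [l₁.NeBot] {l₂ : Filter β} {S : α × β → Set X} :
    setLiminf (l₁ ×ˢ l₂) S ⊆ setLiminf l₂ fun b => setLimsup l₁ fun a => S (a, b) := by
  intro v hv
  refine mem_setLiminf_iff.2 fun ε hε => ?_
  obtain ⟨p₁, hp₁, p₂, hp₂, h⟩ := eventually_prod_iff.1 (mem_setLiminf_iff.1 hv _ (half_pos hε))
  filter_upwards [hp₂] with b hb
  have hfreq : ∃ᶠ a in l₁, (S (a, b) ∩ closedBall v (ε / 2)).Nonempty :=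
    hp₁.frequently.mono fun a ha => by
      obtain ⟨w, hw, hvw⟩ := h ha hb
      exact ⟨w, hw, mem_closedBall'.2 hvw.le⟩
  obtain ⟨w, hw, hvw⟩ := setLimsup_inter_nonempty_of_frequently (isCompact_closedBall v _) hfreq
  exact ⟨w, hw, (mem_closedBall'.1 hvw).trans_lt (half_lt_self hε)⟩

end SetLimits

theorem exists_mem_Ico_eq_and_lt_slope {f : ℝ → ℝ} {a b m c : ℝ} (hab : a ≤ b)
    (hf : ContinuousOn f (Icc a b)) (ha : f a ≤ m) (hb : m + c * (b - a) < f b) :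
    ∃ s ∈ Ico a b, f s = m + c * (s - a) ∧ ∀ z ∈ Ioc s b, c < slope f s z := by
  set g : ℝ → ℝ := fun s => f s - (m + c * (s - a))
  have hg : ContinuousOn g (Icc a b) := hf.sub (by fun_prop)
  set A := Icc a b ∩ g ⁻¹' Iic 0
  have hA : IsCompact A :=
    isCompact_Icc.of_isClosed_subset (hg.preimage_isClosed_of_isClosed isClosed_Icc isClosed_Iic)
      inter_subset_left
  have haA : a ∈ A := ⟨left_mem_Icc.2 hab, by simpa [g] using ha⟩
  -- `s` is the last point at which `f` lies below the line
  obtain ⟨⟨hs_ge, hs_le⟩, hgs⟩ : sSup A ∈ A := hA.sSup_mem ⟨a, haA⟩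
  set s := sSup A
  replace hgs : g s ≤ 0 := hgs
  have above : ∀ z ∈ Ioc s b, 0 < g z := fun z hz => by
    by_contra! hgz
    exact (le_csSup hA.bddAbove ⟨⟨hs_ge.trans hz.1.le, hz.2⟩, hgz⟩).not_gt hz.1
  have hsb : s < b := hs_le.lt_of_ne fun hsb => by
    have : 0 < g b := by simp only [g]; linarith
    exact (hsb ▸ hgs : g b ≤ 0).not_gt this
  have hgs' : 0 ≤ g s := by
    have hcont : ContinuousWithinAt g (Ioc s b) s :=
      (hg s ⟨hs_ge, hs_le⟩).mono (Ioc_subset_Icc_self.trans (Icc_subset_Icc_left hs_ge))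
    rw [ContinuousWithinAt, nhdsWithin_Ioc_eq_nhdsGT hsb] at hcont
    refine ge_of_tendsto hcont ?_
    filter_upwards [Ioc_mem_nhdsGT hsb] with z hz using (above z hz).le
  have hfs : f s = m + c * (s - a) := sub_eq_zero.1 (le_antisymm hgs hgs')
  refine ⟨s, ⟨hs_ge, hsb⟩, hfs, fun z hz => ?_⟩
  have hgz : 0 < f z - (m + c * (z - a)) := above z hz
  rw [slope_def_field, lt_div_iff₀ (sub_pos.2 hz.1)]
  linarith

theorem hasDerivAt_norm_add_smul {F : Type*} [NormedAddCommGroup F] [InnerProductSpace ℝ F]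
    {a v : F} {s : ℝ} (h : a + s • v ≠ 0) :
    HasDerivAt (fun r : ℝ => ‖a + r • v‖) (⟪a + s • v, v⟫ / ‖a + s • v‖) s := by
  have hline : HasDerivAt (fun r : ℝ => a + r • v) v s := by
    simpa using ((hasDerivAt_id s).smul_const v).const_add a
  have hsq := hline.norm_sq.sqrt (by positivity)
  simp only [Real.sqrt_sq (norm_nonneg _)] at hsq
  convert hsq using 1
  field_simp

section Euclidean

variable {k : ℕ}

local notation "H" => EuclideanSpace ℝ (Fin k)

theorem smul_mem_npolar {S : Set H} {p : H} (hp : p ∈ npolar S) {c : ℝ} (hc : 0 ≤ c) :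
    c • p ∈ npolar S := fun s hs => by
  rw [real_inner_smul_left]
  exact mul_nonpos_of_nonneg_of_nonpos hc (hp s hs)

theorem isClosed_npolar (S : Set H) : IsClosed (npolar S) := by
  simp only [npolar, ofPred_forall]
  exact isClosed_biInter fun s _ => isClosed_le (by fun_prop) continuous_const

theorem convex_npolar (S : Set H) : Convex ℝ (npolar S) := fun p hp q hq a b ha hb _ s hs => by
  rw [inner_add_left, real_inner_smul_left, real_inner_smul_left]
  exact add_nonpos (mul_nonpos_of_nonneg_of_nonpos ha (hp s hs))
    (mul_nonpos_of_nonneg_of_nonpos hb (hq s hs))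

theorem subset_npolar_npolar (S : Set H) : S ⊆ npolar (npolar S) := fun s hs p hp => by
  rw [real_inner_comm]
  exact hp s hs

theorem npolar_npolar {S : Set H} (h0 : (0 : H) ∈ S) (hS : ∀ s ∈ S, ∀ c : ℝ, 0 < c → c • s ∈ S) :
    npolar (npolar S) = closure (convexHull ℝ S) := by
  refine Subset.antisymm (fun p hp => ?_) <|
    closure_minimal (convexHull_min (subset_npolar_npolar S) (convex_npolar _)) (isClosed_npolar _)
  by_contra hpK
  obtain ⟨f, u, hfK, hfp⟩ :=
    geometric_hahn_banach_closed_point (convex_convexHull ℝ S).closure isClosed_closure hpK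
  have hfS : ∀ s ∈ S, f s < u := fun s hs => hfK s (subset_closure (subset_convexHull ℝ S hs))
  have hu : 0 < u := by simpa using hfS 0 h0
  set q := (InnerProductSpace.toDual ℝ H).symm f
  have hq : ∀ y, ⟪q, y⟫ = f y := fun y => InnerProductSpace.toDual_symm_apply
  have hqS : q ∈ npolar S := fun s hs => by
    rw [hq]
    by_contra! hpos
    have := hfS _ (hS s hs (u / f s) (div_pos hu hpos))
    rw [map_smul, smul_eq_mul, div_mul_cancel₀ _ hpos.ne'] at this
    exact this.false
  have := hp q hqS
  rw [real_inner_comm, hq] at this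
  linarith

theorem setLiminf_subset_npolar_setLimsup_npolar {α : Type*} {l : Filter α} {T : α → Set H} :
    setLiminf l T ⊆ npolar (setLimsup l fun a => npolar (T a)) := by
  intro v hv p hp
  have hsmall : ∀ δ ∈ Ioo (0 : ℝ) 1, ⟪v, p⟫ ≤ δ * (‖v‖ + ‖p‖ + 1) := by
    rintro δ ⟨hδ, hδ1⟩
    obtain ⟨a, ⟨q, hq, hpq⟩, w, hw, hvw⟩ :=
      ((mem_setLimsup_iff.1 hp δ hδ).and_eventually (mem_setLiminf_iff.1 hv δ hδ)).exists
    have hqn : ‖q‖ ≤ ‖p‖ + 1 := by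
      linarith [norm_le_norm_add_norm_sub' q p, dist_eq_norm' p q ▸ hpq.le]
    calc ⟪v, p⟫ = ⟪q, w⟫ + ⟪p - q, v⟫ + ⟪q, v - w⟫ := by
          simp only [inner_sub_left, inner_sub_right, real_inner_comm v p]; ring
      _ ≤ 0 + ‖p - q‖ * ‖v‖ + ‖q‖ * ‖v - w‖ :=
          add_le_add_three (hq w hw) (real_inner_le_norm _ _) (real_inner_le_norm _ _)
      _ ≤ 0 + δ * ‖v‖ + (‖p‖ + 1) * δ := by
          gcongr
          · rw [← dist_eq_norm]; exact hpq.le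
          · rw [← dist_eq_norm]; exact hvw.le
      _ = δ * (‖v‖ + ‖p‖ + 1) := by ring
  have hlim : Tendsto (fun δ : ℝ => δ * (‖v‖ + ‖p‖ + 1)) (𝓝[>] 0) (𝓝 0) := by
    simpa using ((continuous_mul_const (‖v‖ + ‖p‖ + 1)).tendsto 0).mono_left nhdsWithin_le_nhds
  exact ge_of_tendsto hlim (eventually_of_mem (Ioo_mem_nhdsGT one_pos) hsmall)

theorem sub_mem_npolar_bouligand {E : Set H} {z e : H} (hmin : ∀ e' ∈ E, dist z e ≤ dist z e') :
    z - e ∈ npolar (bouligand E e) := by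
  intro u hu
  -- `‖z - e‖ ≤ ‖z - (e + t • w)‖` for `e + t • w ∈ E` gives `2 ⟪z - e, w⟫ ≤ t ‖w‖²`; let `t → 0`.
  have hF : Continuous fun q : H × ℝ => 2 * ⟪z - e, q.1⟫ - q.2 * ‖q.1‖ ^ 2 := by fun_prop
  have hle : 𝓝 u ×ˢ 𝓝[>] (0 : ℝ) ≤ 𝓝 (u, 0) := by
    rw [nhds_prod_eq]
    exact prod_mono le_rfl nhdsWithin_le_nhds
  have hlim := (hF.tendsto (u, 0)).mono_left hle
  suffices 2 * ⟪z - e, u⟫ ≤ 0 by linarith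
  refine le_of_mem_setLimsup hu (by simpa using hlim) ?_
  filter_upwards [self_mem_nhdsWithin] with t (ht : 0 < t)
  rintro _ ⟨e', he', rfl⟩
  have hfirst : 2 * ⟪z - e, e' - e⟫ ≤ ‖e' - e‖ ^ 2 := by
    have h := hmin e' he'
    rw [dist_eq_norm, dist_eq_norm, show z - e' = (z - e) - (e' - e) by abel,
      ← sq_le_sq₀ (norm_nonneg _) (norm_nonneg _), norm_sub_sq_real (z - e)] at h
    linarith
  have hscale : 2 * ⟪z - e, t⁻¹ • (e' - e)⟫ - t * ‖t⁻¹ • (e' - e)‖ ^ 2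
      = t⁻¹ * (2 * ⟪z - e, e' - e⟫ - ‖e' - e‖ ^ 2) := by
    rw [real_inner_smul_right, norm_smul, mul_pow, Real.norm_eq_abs, sq_abs]
    field_simp
  rw [hscale]
  exact mul_nonpos_of_nonneg_of_nonpos (inv_nonneg.2 ht.le) (by linarith)

theorem exists_normal_inner_ge_of_lt_infDist {E : Set H} (hE : IsClosed E) {y v : H} (hy : y ∈ E)
    {t c : ℝ} (ht : 0 < t) (hc : 0 < c) (hfar : 2 * c * t < infDist (y + t • v) E) :
    ∃ e ∈ E, dist e y ≤ 2 * t * ‖v‖ ∧ ∃ p ∈ npolar (bouligand E e), ‖p‖ = 1 ∧ c ≤ ⟪p, v⟫ := by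
  set φ : ℝ → ℝ := fun s => infDist (y + s • v) E
  have hφ : Continuous φ := (continuous_infDist_pt E).comp (by fun_prop)
  obtain ⟨s, ⟨hs0, hst⟩, hφs, hslope⟩ := exists_mem_Ico_eq_and_lt_slope (m := c * t) (c := c)
    ht.le hφ.continuousOn (by simpa [φ, infDist_zero_of_mem hy] using (mul_pos hc ht).le)
    (by simp only [φ]; linarith)
  obtain ⟨e, he, hde⟩ := hE.exists_infDist_eq_dist ⟨y, hy⟩ (y + s • v)
  set w := (y - e) + s • v with hwdef
  have hwe : ‖w‖ = dist (y + s • v) e := by rw [hwdef, dist_eq_norm]; congr 1; abel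
  have hw : ‖w‖ = φ s := hwe.trans hde.symm
  have hw0 : w ≠ 0 := norm_pos_iff.1 (by rw [hw, hφs]; positivity)
  have hwsv : ‖w‖ ≤ s * ‖v‖ := by
    calc ‖w‖ = φ s := hw
      _ ≤ dist (y + s • v) y := infDist_le_dist_of_mem hy
      _ = s * ‖v‖ := by simp [norm_smul, abs_of_nonneg hs0]
  have hnormal : w ∈ npolar (bouligand E e) := by
    convert sub_mem_npolar_bouligand (z := y + s • v) fun e' he' =>
      hde ▸ infDist_le_dist_of_mem he' using 1
    rw [hwdef]
    abel
  refine ⟨e, he, ?_, ‖w‖⁻¹ • w, smul_mem_npolar hnormal (by positivity), norm_smul_inv_norm hw0, ?_⟩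
  · calc dist e y ≤ dist e (y + s • v) + dist (y + s • v) y := dist_triangle _ _ _
      _ = ‖w‖ + s * ‖v‖ := by
          rw [dist_comm e, ← hwe]
          simp [norm_smul, abs_of_nonneg hs0]
      _ ≤ 2 * t * ‖v‖ := by nlinarith [norm_nonneg v]
  · -- `r ↦ ‖(y - e) + r • v‖` lies above `φ` with equality at `s`,
    -- so its derivative at `s` bounds the right slopes of `φ` from above
    have hlim := (hasDerivAt_iff_tendsto_slope.1 (hasDerivAt_norm_add_smul hw0)).mono_left
      (nhdsGT_le_nhdsNE s)
    rw [real_inner_smul_left, inv_mul_eq_div]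
    refine ge_of_tendsto hlim ?_
    filter_upwards [Ioc_mem_nhdsGT hst] with z hz
    refine (hslope z hz).le.trans ?_
    have hψz : φ z ≤ ‖(y - e) + z • v‖ := by
      simpa [φ, dist_eq_norm, sub_add_eq_add_sub] using infDist_le_dist_of_mem (x := y + z • v) he
    rw [slope_def_field, slope_def_field, ← hw]
    exact div_le_div_of_nonneg_right (by linarith) (sub_pos.2 hz.1).le

theorem frequently_normal_of_notMem_clarkeTangent {E : Set H} (hE : IsClosed E) {x v : H}
    (hv : v ∉ clarkeTangent E x) : ∃ c > 0, ∃ᶠ e in 𝓝[E] x,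
      (npolar (bouligand E e) ∩ (closedBall 0 1 ∩ {p | c ≤ ⟪p, v⟫})).Nonempty := by
  obtain ⟨ε, hε, hfreq⟩ : ∃ ε > 0, ∃ᶠ q in 𝓝[>] (0 : ℝ) ×ˢ 𝓝[E] x,
      ∀ e ∈ E, ε ≤ dist v (q.1⁻¹ • (e - q.2)) := by
    simpa [clarkeTangent, mem_setLiminf_iff] using hv
  refine ⟨ε / 4, by positivity, frequently_iff.2 fun {U} hU => ?_⟩
  obtain ⟨r, hr, hrU⟩ := Metric.mem_nhdsWithin_iff.1 hU
  have hsmall : ∀ᶠ t in 𝓝[>] (0 : ℝ), 0 < t ∧ 2 * t * ‖v‖ < r / 2 := by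
    have hlim : Tendsto (fun t : ℝ => 2 * t * ‖v‖) (𝓝[>] 0) (𝓝 0) := by
      simpa using ((by fun_prop : Continuous fun t : ℝ => 2 * t * ‖v‖).tendsto 0).mono_left
        nhdsWithin_le_nhds
    exact (eventually_mem_nhdsWithin (s := Ioi 0)).and
      (hlim.eventually (gt_mem_nhds (half_pos hr)))
  have hnear : ∀ᶠ y in 𝓝[E] x, y ∈ E ∩ ball x (r / 2) :=
    inter_mem_nhdsWithin E (ball_mem_nhds x (half_pos hr))
  obtain ⟨⟨t, y⟩, hfar, ⟨ht, htv⟩, hy, hyx⟩ := (hfreq.and_eventually (hsmall.prod_mk hnear)).exists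
  dsimp only at hfar ht htv hy hyx
  have hdist : ε * t ≤ infDist (y + t • v) E := (le_infDist ⟨y, hy⟩).2 fun e he => by
    calc ε * t ≤ t * dist v (t⁻¹ • (e - y)) := by rw [mul_comm]; gcongr; exact hfar e he
      _ = dist (y + t • v) e := by
          rw [dist_eq_norm, ← norm_smul_of_nonneg ht.le, smul_sub, smul_smul,
            mul_inv_cancel₀ ht.ne', one_smul, dist_eq_norm]
          congr 1
          abel
  obtain ⟨e, he, hey, p, hp, hpn, hpv⟩ :=
    exists_normal_inner_ge_of_lt_infDist hE hy ht (v := v) (c := ε / 4) (by positivity)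
      (by nlinarith [mul_pos hε ht])
  refine ⟨e, hrU ⟨?_, he⟩, p, hp, mem_closedBall_zero_iff.2 hpn.le, hpv⟩
  rw [mem_ball]
  linarith [dist_triangle e y x, mem_ball.1 hyx]

theorem npolar_limitingNormal_subset_clarkeTangent {E : Set H} (hE : IsClosed E) (x : H) :
    npolar (limitingNormal E x) ⊆ clarkeTangent E x := by
  intro v hv
  by_contra hvC
  obtain ⟨c, hc, hfreq⟩ := frequently_normal_of_notMem_clarkeTangent hE hvC
  have hK : IsCompact (closedBall (0 : H) 1 ∩ {p | c ≤ ⟪p, v⟫}) :=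
    (isCompact_closedBall 0 1).inter_right (isClosed_le continuous_const (by fun_prop))
  obtain ⟨q, hqN, -, hqv⟩ := setLimsup_inter_nonempty_of_frequently hK hfreq
  have hvq := hv q hqN
  rw [real_inner_comm] at hvq
  exact (hqv.trans hvq).not_gt hc

theorem clarkeTangent_subset_npolar_limitingNormal (E : Set H) (x : H) :
    clarkeTangent E x ⊆ npolar (limitingNormal E x) :=
  setLiminf_prod_subset_setLiminf_setLimsup.trans setLiminf_subset_npolar_setLimsup_npolar

theorem clarkeTangent_subset_bouligand {E : Set H} {x : H} (hx : x ∈ E) :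
    clarkeTangent E x ⊆ bouligand E x :=
  (setLiminf_subset_setLiminf_comp (tendsto_id.prodMk (tendsto_const_nhdsWithin hx))).trans
    setLiminf_subset_setLimsup

theorem zero_mem_limitingNormal {E : Set H} {x : H} (hx : x ∈ E) : 0 ∈ limitingNormal E x :=
  haveI := mem_closure_iff_nhdsWithin_neBot.1 (subset_closure hx)
  mem_setLimsup_of_forall_mem fun _ _ _ => (inner_zero_left _).le

theorem smul_mem_limitingNormal {E : Set H} {x p : H} (hp : p ∈ limitingNormal E x) {c : ℝ}
    (hc : 0 < c) : c • p ∈ limitingNormal E x :=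
  smul_mem_setLimsup hc.ne' (fun _ _ hw => smul_mem_npolar hw hc.le) hp

end Euclidean

/-- For a closed set `E` and `x ∈ E`: `T^C_E(x) = (N_E(x))⁻ ⊆ T_E(x)` and
`(T^C_E(x))⁻ = cl co N_E(x)`. -/
theorem stmt11 {k : ℕ} (E : Set (EuclideanSpace ℝ (Fin k))) (hE : IsClosed E)
    (x : EuclideanSpace ℝ (Fin k)) (hx : x ∈ E) :
    clarkeTangent E x = npolar (limitingNormal E x) ∧
      clarkeTangent E x ⊆ bouligand E x ∧
      npolar (clarkeTangent E x) = closure (convexHull ℝ (limitingNormal E x)) := by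
  have hC : clarkeTangent E x = npolar (limitingNormal E x) :=
    (clarkeTangent_subset_npolar_limitingNormal E x).antisymm
      (npolar_limitingNormal_subset_clarkeTangent hE x)
  refine ⟨hC, clarkeTangent_subset_bouligand hx, ?_⟩
  rw [hC]
  exact npolar_npolar (zero_mem_limitingNormal hx) fun p hp c hc => smul_mem_limitingNormal hp hc
end
end
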